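/- arXiv:2204.07961 — 2 statements merged into one kernel-verified Lean document; each statement's English description precedes it below -/
import Mathlib

section
/- Let μ̂(n) = π√n and define s⁽¹⁾₊(n) = 1 + 1/(2n) + 1/(2π n^{3/2}) + (1/(2π²) − 1/8)/n² + (1/(2π³) − 1/(8π))/n^{5/2} + (1/16 + 1/(2π⁴) − 1/(8π²))/n³ + (1/(2π⁵) − 1/(8π³) + 1/(16π))/n^{7/2}. Then for all integers n ≥ 1, s⁽¹⁾₊(n) − 2/n⁴ < (μ̂(n+1) − 1)/(μ̂(n) − 1) < s⁽¹⁾₊(n) + 2/n⁴. -/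
/-!
With `x = 1/√n` and `q = 1/π`, dividing numerator and denominator by `π√n` turns the ratio
into `(√(1 + x²) - q x) / (1 - q x)`, and the bracket in the statement is the degree-7 Taylor
polynomial `S` of this function of `x`. Hence `S (1 - q x) + q x` differs from the Taylor
polynomial `T = 1 + x²/2 - x⁴/8 + x⁶/16` of `√(1 + x²)` only by a small multiple `c x⁸`, and
`1 + x² - (T - c x⁸)² = O(x⁸)` gives `|√(1 + x²) - (T - c x⁸)| < x⁸`. Dividing by
`1 - q x ≥ 1/2` yields the error bound `2 x⁸ = 2/n⁴`.
-/

open Real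

namespace PiSqrtRatio

noncomputable def sqrtTaylor (x : ℝ) : ℝ := 1 + x ^ 2 / 2 - x ^ 4 / 8 + x ^ 6 / 16

noncomputable def ratioSeries (q x : ℝ) : ℝ :=
  1 + x ^ 2 / 2 + q * x ^ 3 / 2 + (q ^ 2 / 2 - 1 / 8) * x ^ 4 + (q ^ 3 / 2 - q / 8) * x ^ 5
    + (1 / 16 + q ^ 4 / 2 - q ^ 2 / 8) * x ^ 6 + (q ^ 5 / 2 - q ^ 3 / 8 + q / 16) * x ^ 7

noncomputable def ratioSeriesDefect (q : ℝ) : ℝ := q ^ 6 / 2 - q ^ 4 / 8 + q ^ 2 / 16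

theorem ratioSeries_mul_add (q x : ℝ) :
    ratioSeries q x * (1 - q * x) + q * x = sqrtTaylor x - ratioSeriesDefect q * x ^ 8 := by
  unfold ratioSeries sqrtTaylor ratioSeriesDefect
  ring

theorem ratioSeriesDefect_mem_Icc {q : ℝ} (hq₀ : 0 ≤ q) (hq : q ≤ 1 / 2) :
    ratioSeriesDefect q ∈ Set.Icc 0 (1 / 8) := by
  have hq2 : q ^ 2 ≤ 1 / 4 := by nlinarith
  unfold ratioSeriesDefect
  constructor <;> nlinarith [sq_nonneg (q ^ 2 - 1 / 8), sq_nonneg q]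

theorem one_add_sq_sub_sq_sqrtTaylor (x c : ℝ) :
    1 + x ^ 2 - (sqrtTaylor x - c * x ^ 8) ^ 2
      = x ^ 8 * (-5 / 64 + x ^ 2 / 64 - x ^ 4 / 256 + 2 * c * sqrtTaylor x - c ^ 2 * x ^ 8) := by
  unfold sqrtTaylor
  ring

theorem abs_sqrt_one_add_sq_sub_lt {x c : ℝ} (hx₀ : 0 < x) (hx : x ≤ 1) (hc₀ : 0 ≤ c)
    (hc : c ≤ 1 / 8) : |√(1 + x ^ 2) - (sqrtTaylor x - c * x ^ 8)| < x ^ 8 := by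
  set v := √(1 + x ^ 2)
  set P := sqrtTaylor x - c * x ^ 8
  have hx2 : x ^ 2 ≤ 1 := pow_le_one₀ hx₀.le hx
  have hx8 : x ^ 8 ≤ 1 := pow_le_one₀ hx₀.le hx
  have hx8₀ : 0 < x ^ 8 := by positivity
  have hT₀ : 1 ≤ sqrtTaylor x := by unfold sqrtTaylor; nlinarith [pow_nonneg hx₀.le 6]
  have hT : sqrtTaylor x ≤ 2 := by unfold sqrtTaylor; nlinarith [pow_nonneg hx₀.le 4]
  have hP : 0 ≤ P := by
    nlinarith [mul_le_mul hc hx8 hx8₀.le (by norm_num : (0 : ℝ) ≤ 1 / 8)]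
  have hv : 1 < v := Real.lt_sqrt_of_sq_lt (by nlinarith)
  have hG : |-5 / 64 + x ^ 2 / 64 - x ^ 4 / 256 + 2 * c * sqrtTaylor x - c ^ 2 * x ^ 8| ≤ 1 := by
    have hcT : 2 * c * sqrtTaylor x ≤ 1 / 2 := by
      nlinarith [mul_le_mul hc hT (by linarith) (by norm_num)]
    have hcT₀ : 0 ≤ 2 * c * sqrtTaylor x := by positivity
    have hcx : c ^ 2 * x ^ 8 ≤ 1 / 64 := by
      nlinarith [mul_le_mul (mul_le_mul hc hc hc₀ (by norm_num)) hx8 hx8₀.le (by norm_num)]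
    have hx4 : x ^ 4 ≤ 1 := pow_le_one₀ hx₀.le hx
    rw [abs_le]
    constructor <;> nlinarith [pow_nonneg hx₀.le 4, pow_nonneg hx₀.le 2,
      mul_nonneg (sq_nonneg c) hx8₀.le]
  have hprod : (v - P) * (v + P)
      = x ^ 8 * (-5 / 64 + x ^ 2 / 64 - x ^ 4 / 256 + 2 * c * sqrtTaylor x - c ^ 2 * x ^ 8) := by
    rw [← one_add_sq_sub_sq_sqrtTaylor x c, ← Real.sq_sqrt (by positivity : 0 ≤ 1 + x ^ 2)]
    ring
  have habs : |v - P| * (v + P) ≤ x ^ 8 := by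
    rw [← abs_of_pos (by linarith : 0 < v + P), ← abs_mul, hprod, abs_mul, abs_of_pos hx8₀]
    exact mul_le_of_le_one_right hx8₀.le hG
  nlinarith [abs_nonneg (v - P)]

theorem abs_sqrt_ratio_sub_ratioSeries_lt {q x : ℝ} (hx₀ : 0 < x) (hx : x ≤ 1)
    (hq₀ : 0 ≤ q) (hq : q ≤ 1 / 2) :
    |(√(1 + x ^ 2) - q * x) / (1 - q * x) - ratioSeries q x| < 2 * x ^ 8 := by
  have hqx : 1 / 2 ≤ 1 - q * x := by nlinarith
  obtain ⟨hc₀, hc⟩ := ratioSeriesDefect_mem_Icc hq₀ hq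
  have key := abs_sqrt_one_add_sq_sub_lt hx₀ hx hc₀ hc
  rw [← ratioSeries_mul_add] at key
  have hsplit : (√(1 + x ^ 2) - q * x) / (1 - q * x) - ratioSeries q x
      = (√(1 + x ^ 2) - (ratioSeries q x * (1 - q * x) + q * x)) / (1 - q * x) := by
    rw [eq_div_iff (by linarith), sub_mul, div_mul_cancel₀ _ (by linarith)]
    ring
  calc |(√(1 + x ^ 2) - q * x) / (1 - q * x) - ratioSeries q x|
      = |√(1 + x ^ 2) - (ratioSeries q x * (1 - q * x) + q * x)| / (1 - q * x) := by
        rw [hsplit, abs_div, abs_of_pos (by linarith : 0 < 1 - q * x)]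
    _ < x ^ 8 / (1 / 2) := by gcongr
    _ = 2 * x ^ 8 := by ring

theorem sqrt_ratio_eq {y : ℝ} (hy : 0 < y) {p : ℝ} (hp : p ≠ 0) :
    (p * √(y + 1) - 1) / (p * √y - 1)
      = (√(1 + (√y)⁻¹ ^ 2) - p⁻¹ * (√y)⁻¹) / (1 - p⁻¹ * (√y)⁻¹) := by
  have hsqrt : √(y + 1) = √y * √(1 + (√y)⁻¹ ^ 2) := by
    rw [← Real.sqrt_mul hy.le]
    congr 1
    field_simp
    rw [Real.sq_sqrt hy.le]
    ring
  rw [hsqrt, ← mul_div_mul_left _ _ (by positivity : p⁻¹ * (√y)⁻¹ ≠ 0)]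
  field_simp

theorem seriesBracket_eq {y : ℝ} (hy : 0 ≤ y) (p : ℝ) :
    1 + 1 / (2 * y) + 1 / (2 * p * y ^ ((3 : ℝ) / 2))
      + (1 / (2 * p ^ 2) - 1 / 8) / y ^ 2
      + (1 / (2 * p ^ 3) - 1 / (8 * p)) / y ^ ((5 : ℝ) / 2)
      + (1 / 16 + 1 / (2 * p ^ 4) - 1 / (8 * p ^ 2)) / y ^ 3
      + (1 / (2 * p ^ 5) - 1 / (8 * p ^ 3) + 1 / (16 * p)) / y ^ ((7 : ℝ) / 2)
      = ratioSeries p⁻¹ (√y)⁻¹ := by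
  obtain ⟨a, ha⟩ : ∃ a, √y = a := ⟨_, rfl⟩
  have hy_eq : y = a ^ 2 := by rw [← ha, Real.sq_sqrt hy]
  simp only [Real.rpow_div_two_eq_sqrt _ hy, ha, ratioSeries]
  subst hy_eq
  norm_num
  ring

end PiSqrtRatio

open PiSqrtRatio in
theorem stmt_11 (n : ℕ) (hn : 1 ≤ n) :
    (1 + 1 / (2 * (n : ℝ)) + 1 / (2 * Real.pi * (n : ℝ) ^ ((3 : ℝ) / 2))
      + (1 / (2 * Real.pi ^ 2) - 1 / 8) / (n : ℝ) ^ 2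
      + (1 / (2 * Real.pi ^ 3) - 1 / (8 * Real.pi)) / (n : ℝ) ^ ((5 : ℝ) / 2)
      + (1 / 16 + 1 / (2 * Real.pi ^ 4) - 1 / (8 * Real.pi ^ 2)) / (n : ℝ) ^ 3
      + (1 / (2 * Real.pi ^ 5) - 1 / (8 * Real.pi ^ 3) + 1 / (16 * Real.pi)) / (n : ℝ) ^ ((7 : ℝ) / 2))
      - 2 / (n : ℝ) ^ 4
    < (Real.pi * Real.sqrt (n + 1) - 1) / (Real.pi * Real.sqrt n - 1) ∧
    (Real.pi * Real.sqrt (n + 1) - 1) / (Real.pi * Real.sqrt n - 1)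
    < (1 + 1 / (2 * (n : ℝ)) + 1 / (2 * Real.pi * (n : ℝ) ^ ((3 : ℝ) / 2))
      + (1 / (2 * Real.pi ^ 2) - 1 / 8) / (n : ℝ) ^ 2
      + (1 / (2 * Real.pi ^ 3) - 1 / (8 * Real.pi)) / (n : ℝ) ^ ((5 : ℝ) / 2)
      + (1 / 16 + 1 / (2 * Real.pi ^ 4) - 1 / (8 * Real.pi ^ 2)) / (n : ℝ) ^ 3
      + (1 / (2 * Real.pi ^ 5) - 1 / (8 * Real.pi ^ 3) + 1 / (16 * Real.pi)) / (n : ℝ) ^ ((7 : ℝ) / 2))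
      + 2 / (n : ℝ) ^ 4 := by
  have hn₀ : (0 : ℝ) < n := by exact_mod_cast hn
  have hx : (√(n : ℝ))⁻¹ ≤ 1 := inv_le_one_of_one_le₀ (Real.one_le_sqrt.mpr (by exact_mod_cast hn))
  have hq : π⁻¹ ≤ 1 / 2 := by
    rw [one_div]
    exact inv_anti₀ two_pos Real.two_le_pi
  have herr : 2 / (n : ℝ) ^ 4 = 2 * (√(n : ℝ))⁻¹ ^ 8 := by
    rw [show 8 = 2 * 4 from rfl, pow_mul, inv_pow, Real.sq_sqrt hn₀.le]
    ring
  have hbound := abs_sub_lt_iff.mp <| abs_sqrt_ratio_sub_ratioSeries_lt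
    (by positivity) hx (by positivity) hq
  rw [seriesBracket_eq hn₀.le, herr, sqrt_ratio_eq hn₀ Real.pi_ne_zero]
  constructor <;> linarith [hbound.1, hbound.2]
end

section
/- Define s_n = 1 − π/(4n^{3/2}) + 1/n² − 3/(4π n^{5/2}) − (32 + π⁴)/(32π²)·1/n³ − (5/(4π³) + 21π/64)·1/n^{7/2}. Then for all real n ≥ 5, (s_n − 15/n⁴)·(1 + π/(4 n^{3/2})) > 1. -/
set_option maxHeartbeats 2000000


theorem stmt_18 (n : ℝ) (hn : 5 ≤ n) :
    1 < ((1 - Real.pi / (4 * n ^ ((3 : ℝ) / 2)) + 1 / n ^ 2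
      - 3 / (4 * Real.pi * n ^ ((5 : ℝ) / 2))
      - (32 + Real.pi ^ 4) / (32 * Real.pi ^ 2) * (1 / n ^ 3)
      - (5 / (4 * Real.pi ^ 3) + 21 * Real.pi / 64) * (1 / n ^ ((7 : ℝ) / 2)))
      - 15 / n ^ 4) * (1 + Real.pi / (4 * n ^ ((3 : ℝ) / 2))) := by
  have hn0 : (0:ℝ) < n := by linarith
  set u := Real.sqrt n with hu
  have hu0 : 0 < u := Real.sqrt_pos.mpr hn0
  have hun : u ^ 2 = n := Real.sq_sqrt hn0.le
  have hpow : ∀ k : ℕ, n ^ ((k : ℝ) / 2) = u ^ k := by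
    intro k
    rw [hu, Real.sqrt_eq_rpow, ← Real.rpow_natCast (n ^ ((1:ℝ)/2)) k,
      ← Real.rpow_mul hn0.le]
    congr 1
    ring
  have h32 : n ^ ((3 : ℝ) / 2) = u ^ 3 := by have := hpow 3; norm_num at this ⊢; exact this
  have h52 : n ^ ((5 : ℝ) / 2) = u ^ 5 := by have := hpow 5; norm_num at this ⊢; exact this
  have h72 : n ^ ((7 : ℝ) / 2) = u ^ 7 := by have := hpow 7; norm_num at this ⊢; exact this
  have hpi0 : 0 < Real.pi := Real.pi_pos
  have hA : (3.14159 : ℝ) < Real.pi := by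
    have := Real.pi_gt_d6; norm_num at this ⊢; linarith
  have hB : Real.pi < (3.1416 : ℝ) := by
    have := Real.pi_lt_d6; norm_num at this ⊢; linarith
  have hu5 : (2.236067 : ℝ) ≤ u := by nlinarith [hun, hu0.le]
  rw [h32, h52, h72, ← hun]
  -- power bounds for pi
  have hp2 : Real.pi ^ 2 < 3.1416 ^ 2 := by nlinarith
  have hp3 : (3.14159:ℝ) ^ 3 < Real.pi ^ 3 := by nlinarith
  have hp4 : Real.pi ^ 4 < 3.1416 ^ 4 := by nlinarith
  have hp5 : Real.pi ^ 5 < 3.1416 ^ 5 := by nlinarith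
  have hp6 : Real.pi ^ 6 < 3.1416 ^ 6 := by nlinarith
  -- positivity of the u-coefficient of pi^3
  have hu2 : (5:ℝ) ≤ u ^ 2 := by rw [hun]; exact hn
  have hc3 : (0:ℝ) ≤ 256 * u ^ 7 - 3888 * u ^ 3 := by
    have inner : (0:ℝ) ≤ 256 * u ^ 4 - 3888 := by nlinarith [hu2, sq_nonneg (u ^ 2 - 5)]
    have h := mul_nonneg (pow_pos hu0 3).le inner
    nlinarith [h]
  have g3 : (3.14159:ℝ) ^ 3 * (256 * u ^ 7 - 3888 * u ^ 3)
      ≤ Real.pi ^ 3 * (256 * u ^ 7 - 3888 * u ^ 3) :=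
    mul_le_mul_of_nonneg_right hp3.le hc3
  have g1 : Real.pi * (256 * u ^ 5 + 80 * u) ≤ 3.1416 * (256 * u ^ 5 + 80 * u) := by
    have h : (0:ℝ) ≤ 256 * u ^ 5 + 80 * u := by positivity
    exact mul_le_mul_of_nonneg_right hB.le h
  have g2 : Real.pi ^ 2 * (192 * u ^ 6 + 64 * u ^ 2)
      ≤ 3.1416 ^ 2 * (192 * u ^ 6 + 64 * u ^ 2) := by
    have h : (0:ℝ) ≤ 192 * u ^ 6 + 64 * u ^ 2 := by positivity
    exact mul_le_mul_of_nonneg_right hp2.le h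
  have g4 : Real.pi ^ 4 * (20 * u ^ 4 + 960) ≤ 3.1416 ^ 4 * (20 * u ^ 4 + 960) := by
    have h : (0:ℝ) ≤ 20 * u ^ 4 + 960 := by positivity
    exact mul_le_mul_of_nonneg_right hp4.le h
  have g5 : Real.pi ^ 5 * (24 * u ^ 5 + 21 * u) ≤ 3.1416 ^ 5 * (24 * u ^ 5 + 21 * u) := by
    have h : (0:ℝ) ≤ 24 * u ^ 5 + 21 * u := by positivity
    exact mul_le_mul_of_nonneg_right hp5.le h
  have g6 : Real.pi ^ 6 * (2 * u ^ 2) ≤ 3.1416 ^ 6 * (2 * u ^ 2) := by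
    have h : (0:ℝ) ≤ 2 * u ^ 2 := by positivity
    exact mul_le_mul_of_nonneg_right hp6.le h
  -- rational-coefficient polynomial lower bound
  have hR : (0:ℝ) < 3.14159 ^ 3 * (256 * u ^ 7 - 3888 * u ^ 3)
      - 3.1416 * (256 * u ^ 5 + 80 * u)
      - 3.1416 ^ 2 * (192 * u ^ 6 + 64 * u ^ 2)
      - 3.1416 ^ 4 * (20 * u ^ 4 + 960)
      - 3.1416 ^ 5 * (24 * u ^ 5 + 21 * u)
      - 3.1416 ^ 6 * (2 * u ^ 2)
      - 320 * u ^ 4 := by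
    have t0 : (0:ℝ) ≤ u - 2.236067 := by linarith
    nlinarith [t0, mul_nonneg t0 t0, mul_nonneg (mul_nonneg t0 t0) t0,
      mul_nonneg (mul_nonneg (mul_nonneg t0 t0) t0) t0,
      mul_nonneg (mul_nonneg (mul_nonneg (mul_nonneg t0 t0) t0) t0) t0,
      mul_nonneg (mul_nonneg (mul_nonneg (mul_nonneg (mul_nonneg t0 t0) t0) t0) t0) t0,
      mul_nonneg (mul_nonneg (mul_nonneg (mul_nonneg (mul_nonneg (mul_nonneg t0 t0) t0) t0) t0) t0) t0]
  have key : (0:ℝ) < 256 * Real.pi ^ 3 * u ^ 7 - 192 * Real.pi ^ 2 * u ^ 6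
      - (256 * Real.pi + 24 * Real.pi ^ 5) * u ^ 5
      - (320 + 20 * Real.pi ^ 4) * u ^ 4
      - 3888 * Real.pi ^ 3 * u ^ 3
      - (64 * Real.pi ^ 2 + 2 * Real.pi ^ 6) * u ^ 2
      - (80 * Real.pi + 21 * Real.pi ^ 5) * u
      - 960 * Real.pi ^ 4 := by nlinarith [hR, g1, g2, g3, g4, g5, g6]
  have hune : u ≠ 0 := ne_of_gt hu0
  have hpine : Real.pi ≠ 0 := ne_of_gt hpi0
  have heq : ((1 - Real.pi / (4 * u ^ 3) + 1 / (u ^ 2) ^ 2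
      - 3 / (4 * Real.pi * u ^ 5)
      - (32 + Real.pi ^ 4) / (32 * Real.pi ^ 2) * (1 / (u ^ 2) ^ 3)
      - (5 / (4 * Real.pi ^ 3) + 21 * Real.pi / 64) * (1 / u ^ 7))
      - 15 / (u ^ 2) ^ 4) * (1 + Real.pi / (4 * u ^ 3)) - 1
      = (256 * Real.pi ^ 3 * u ^ 7 - 192 * Real.pi ^ 2 * u ^ 6
      - (256 * Real.pi + 24 * Real.pi ^ 5) * u ^ 5
      - (320 + 20 * Real.pi ^ 4) * u ^ 4
      - 3888 * Real.pi ^ 3 * u ^ 3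
      - (64 * Real.pi ^ 2 + 2 * Real.pi ^ 6) * u ^ 2
      - (80 * Real.pi + 21 * Real.pi ^ 5) * u
      - 960 * Real.pi ^ 4) / (256 * Real.pi ^ 3 * u ^ 11) := by
    field_simp
    ring
  have hden : (0:ℝ) < 256 * Real.pi ^ 3 * u ^ 11 := by positivity
  have := div_pos key hden
  linarith [heq, this]
end
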